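/- Let q = 2^m, k ∈ F_q with Tr(k) = 1, A ∈ F_q, B ∈ F_q^*, C = A + 1, D = B, and suppose A^2 + AB + B^2k = B^2 + B. Then Tr((C^2 + CD + D^2k)/(A^2 + AB + B^2k)) = Tr(1 + 1/B), and Tr(1 + 1/B) = 0 contradicts Tr(k) = 1; hence Tr((C^2+CD+D^2k)/(A^2+AB+B^2k)) = 0 is impossible under these hypotheses. -/

import Mathlib

/-!
In characteristic 2 the hypothesis reads `k = x^2 + x + (1 + 1/B)` with `x = A/B`, and
`Tr(x^2 + x) = x^q + x = 0` by telescoping, so `Tr(1 + 1/B) = Tr(k) = 1`. The numerator is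
`(B + 1)^2` and the denominator `B (B + 1)`, so the quotient is `1 + 1/B`.
-/

/-- The absolute trace `Tr(z) = z + z^2 + z^4 + ⋯ + z^{2^{m-1}}`, computed inside the field. -/
def traceSum {F : Type*} [Field F] (m : ℕ) (z : F) : F :=
  ∑ j ∈ Finset.range m, z ^ 2 ^ j

theorem charP_two_of_card_eq_two_pow {F : Type*} [Field F] [Fintype F] {m : ℕ}
    (hF : Fintype.card F = 2 ^ m) : CharP F 2 := by
  have hp := CharP.char_is_prime F (ringChar F)
  have hdvd : ringChar F ∣ 2 ^ m := hF ▸ (ringChar.spec F _).mp (FiniteField.cast_card_eq_zero F)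
  rw [← (Nat.prime_dvd_prime_iff_eq hp Nat.prime_two).mp (hp.dvd_of_dvd_pow hdvd)]
  exact ringChar.charP F

section CharTwo

variable {F : Type*} [Field F] [CharP F 2]

theorem traceSum_add (m : ℕ) (x y : F) :
    traceSum m (x + y) = traceSum m x + traceSum m y := by
  simp only [traceSum, add_pow_char_pow, Finset.sum_add_distrib]

theorem traceSum_sq_add_self (m : ℕ) (x : F) : traceSum m (x ^ 2 + x) = x ^ 2 ^ m + x := by
  have hstep (j : ℕ) : (x ^ 2 + x) ^ 2 ^ j = x ^ 2 ^ (j + 1) - x ^ 2 ^ j := by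
    rw [add_pow_char_pow, ← pow_mul, ← pow_succ', CharTwo.sub_eq_add]
  rw [traceSum, Finset.sum_congr rfl fun j _ => hstep j, Finset.sum_range_sub (x ^ 2 ^ ·),
    pow_zero, pow_one, CharTwo.sub_eq_add]

end CharTwo

theorem traceSum_sq_add_self_eq_zero {F : Type*} [Field F] [Fintype F] {m : ℕ}
    (hF : Fintype.card F = 2 ^ m) (x : F) : traceSum m (x ^ 2 + x) = 0 := by
  have := charP_two_of_card_eq_two_pow hF
  rw [traceSum_sq_add_self, ← hF, FiniteField.pow_card, CharTwo.add_self_eq_zero]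

theorem stmt_15_general {F : Type*} [Field F] [Fintype F] (m : ℕ)
    (hF : Fintype.card F = 2 ^ m) (k : F) (hk : traceSum m k = 1)
    (A B C D : F) (hB : B ≠ 0) (hC : C = A + 1) (hD : D = B)
    (hyp : A ^ 2 + A * B + B ^ 2 * k = B ^ 2 + B) :
    traceSum m ((C ^ 2 + C * D + D ^ 2 * k) / (A ^ 2 + A * B + B ^ 2 * k)) =
        traceSum m (1 + 1 / B) ∧
      traceSum m ((C ^ 2 + C * D + D ^ 2 * k) / (A ^ 2 + A * B + B ^ 2 * k)) ≠ 0 := by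
  have := charP_two_of_card_eq_two_pow hF
  have hk_eq : k = (A / B) ^ 2 + A / B + (1 + 1 / B) := by
    field_simp
    linear_combination hyp - (A ^ 2 + A * B) * CharTwo.two_eq_zero (R := F)
  have htrace : traceSum m (1 + 1 / B) = 1 := by
    rwa [hk_eq, traceSum_add, traceSum_sq_add_self_eq_zero hF, zero_add] at hk
  have hnum : C ^ 2 + C * D + D ^ 2 * k = (B + 1) * (B + 1) := by
    subst hC hD
    linear_combination hyp + A * CharTwo.two_eq_zero (R := F)
  have hratio : (C ^ 2 + C * D + D ^ 2 * k) / (A ^ 2 + A * B + B ^ 2 * k) = 1 + 1 / B := by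
    rw [hnum, hyp]
    by_cases hB1 : B + 1 = 0
    -- both sides vanish: the left one by division by zero
    · have hB_one : B = 1 := by linear_combination hB1 - CharTwo.two_eq_zero (R := F)
      simp [hB_one, CharTwo.add_self_eq_zero]
    · field_simp
  rw [hratio, htrace]
  exact ⟨rfl, one_ne_zero⟩

/-- With `C = A + 1`, `D = B` and `A^2 + AB + B^2 k = B^2 + B`, one has
`Tr((C^2+CD+D^2k)/(A^2+AB+B^2k)) = Tr(1 + 1/B)`, and this trace cannot vanish
since `Tr(k) = 1`. -/
theorem stmt_15 {F : Type*} [Field F] [Fintype F] (m : ℕ) (hm : 0 < m)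
    (hF : Fintype.card F = 2 ^ m) (k : F) (hk : traceSum m k = 1)
    (A B C D : F) (hB : B ≠ 0) (hC : C = A + 1) (hD : D = B)
    (hyp : A ^ 2 + A * B + B ^ 2 * k = B ^ 2 + B) :
    traceSum m ((C ^ 2 + C * D + D ^ 2 * k) / (A ^ 2 + A * B + B ^ 2 * k)) =
        traceSum m (1 + 1 / B) ∧
      traceSum m ((C ^ 2 + C * D + D ^ 2 * k) / (A ^ 2 + A * B + B ^ 2 * k)) ≠ 0 :=
  stmt_15_general m hF k hk A B C D hB hC hD hyp
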